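/- Assume the valuation setup with sum formula on a field K. Let u = (u₁, u₂) and v = (v₁, v₂) be pairs of elements of K^* with u₁ + u₂ = 1 and v₁ + v₂ = 1, and suppose u ≠ v. Then H(u₁, u₂) ≤ H(v₁·u₁^{-1}, v₂·u₂^{-1}). -/

import Mathlib

/-- A valuation setup with sum formula on a field `K`: for each `i` in the index set `I`, a
map `v i : K → ℤ` which restricts to a group homomorphism `Kˣ → ℤ` satisfying the
ultrametric inequality, with only finitely many `v i` nonzero at each `x ≠ 0`, positive
integer degrees `deg i`, and the sum formula `Σ_i v i x · deg i = 0` for `x ≠ 0`. -/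
structure ValuationSetup (K : Type*) [Field K] (I : Type*) where
  v : I → K → ℤ
  deg : I → ℕ
  deg_pos : ∀ i, 0 < deg i
  v_mul : ∀ i (x y : K), x ≠ 0 → y ≠ 0 → v i (x * y) = v i x + v i y
  v_add : ∀ i (x y : K), x ≠ 0 → y ≠ 0 → x + y ≠ 0 → min (v i x) (v i y) ≤ v i (x + y)
  finite_support : ∀ x : K, x ≠ 0 → {i | v i x ≠ 0}.Finite
  sum_formula : ∀ x : K, x ≠ 0 → ∑ᶠ i, v i x * (deg i : ℤ) = 0

/-- The homogeneous height `H^hom(P) = −Σ_i min{v i (P j) : P j ≠ 0} · deg i` of a (nonzero)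
vector `P`. -/
noncomputable def Hhom {K : Type*} [Field K] {I : Type*} (VS : ValuationSetup K I)
    {m : ℕ} (P : Fin m → K) : ℤ :=
  -∑ᶠ i, sInf ((fun j => VS.v i (P j)) '' {j | P j ≠ 0}) * (VS.deg i : ℤ)

/-!
Put `w = u₁ - v₁ = v₂ - u₂ ≠ 0`. By the sum formula the height does not change under scaling,
so `H(u₁, u₂) = H^hom(w/(u₁u₂), w/u₂, w/u₁)`. The three entries of this vector are
`v₂/u₂ - v₁/u₁`, `v₂/u₂ - 1` and `1 - v₁/u₁`, differences of entries of `(1, v₁/u₁, v₂/u₂)`;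
by the ultrametric inequality their valuations are at least the minimal valuation of that
vector at every place, which gives the inequality of heights.
-/

namespace ValuationSetup

variable {K : Type*} [Field K] {I : Type*} (VS : ValuationSetup K I)

lemma v_one (i : I) : VS.v i 1 = 0 := by
  have := VS.v_mul i 1 1 one_ne_zero one_ne_zero
  rw [mul_one] at this
  omega

lemma v_neg (i : I) {x : K} (hx : x ≠ 0) : VS.v i (-x) = VS.v i x := by
  have hsq := VS.v_mul i (-1) (-1) (neg_ne_zero.mpr one_ne_zero) (neg_ne_zero.mpr one_ne_zero)
  rw [neg_one_mul, neg_neg, v_one] at hsq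
  rw [← neg_one_mul, VS.v_mul i (-1) x (neg_ne_zero.mpr one_ne_zero) hx]
  omega

lemma min_le_v_sub (i : I) {x y : K} (hx : x ≠ 0) (hy : y ≠ 0) (hxy : x - y ≠ 0) :
    min (VS.v i x) (VS.v i y) ≤ VS.v i (x - y) := by
  rw [← VS.v_neg i hy, sub_eq_add_neg]
  exact VS.v_add i x (-y) hx (neg_ne_zero.mpr hy) (by rwa [← sub_eq_add_neg])

noncomputable def minVal {m : ℕ} (i : I) (P : Fin m → K) : ℤ :=
  sInf ((fun j => VS.v i (P j)) '' {j | P j ≠ 0})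

variable {VS} {m : ℕ} {P : Fin m → K} {i : I}

lemma minVal_le {j : Fin m} (hj : P j ≠ 0) : VS.minVal i P ≤ VS.v i (P j) :=
  csInf_le (Set.toFinite _).bddBelow ⟨j, hj, rfl⟩

lemma exists_minVal_eq (hP : P ≠ 0) (i : I) : ∃ j, P j ≠ 0 ∧ VS.minVal i P = VS.v i (P j) := by
  obtain ⟨j, hj⟩ := Function.ne_iff.mp hP
  obtain ⟨k, hk, hmin⟩ := ((Set.nonempty_of_mem (show j ∈ {j | P j ≠ 0} from hj)).image
    (fun j => VS.v i (P j))).csInf_mem (Set.toFinite _)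
  exact ⟨k, hk, hmin.symm⟩

lemma le_minVal (hP : P ≠ 0) {n : ℤ} (h : ∀ j, P j ≠ 0 → n ≤ VS.v i (P j)) :
    n ≤ VS.minVal i P := by
  obtain ⟨j, hj, hmin⟩ := exists_minVal_eq hP i
  exact hmin ▸ h j hj

lemma minVal_le_v_sub {k l : Fin m} (hkl : P k - P l ≠ 0) :
    VS.minVal i P ≤ VS.v i (P k - P l) := by
  by_cases hl : P l = 0
  · rw [hl, sub_zero] at hkl ⊢
    exact minVal_le hkl
  by_cases hk : P k = 0
  · rw [hk, zero_sub, VS.v_neg i hl]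
    exact minVal_le hl
  exact (le_min (minVal_le hk) (minVal_le hl)).trans (VS.min_le_v_sub i hk hl hkl)

lemma minVal_smul {c : K} (hc : c ≠ 0) (hP : P ≠ 0) :
    VS.minVal i (c • P) = VS.v i c + VS.minVal i P := by
  have hcP : c • P ≠ 0 := smul_ne_zero hc hP
  apply le_antisymm
  · obtain ⟨j, hj, hmin⟩ := exists_minVal_eq hP i
    rw [hmin, ← VS.v_mul i c (P j) hc hj]
    exact minVal_le (mul_ne_zero hc hj)
  · refine le_minVal hcP fun j hj => ?_
    have hPj : P j ≠ 0 := right_ne_zero_of_mul hj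
    rw [Pi.smul_apply, smul_eq_mul, VS.v_mul i c (P j) hc hPj]
    exact Int.add_le_add_left (minVal_le hPj) _

lemma hasFiniteSupport_minVal (hP : P ≠ 0) :
    Function.HasFiniteSupport fun i => VS.minVal i P := by
  refine ((Set.toFinite {j | P j ≠ 0}).biUnion fun j hj => VS.finite_support (P j) hj).subset ?_
  intro i hi
  obtain ⟨j, hj, hmin⟩ := exists_minVal_eq hP i
  exact Set.mem_iUnion₂.mpr ⟨j, hj, by rw [Set.mem_ofPred_eq, ← hmin]; exact hi⟩

end ValuationSetup

open ValuationSetup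

section Height

variable {K : Type*} [Field K] {I : Type*} (VS : ValuationSetup K I) {m : ℕ}

lemma Hhom_eq_neg_finsum_minVal (P : Fin m → K) :
    Hhom VS P = -∑ᶠ i, VS.minVal i P * (VS.deg i : ℤ) :=
  rfl

lemma Hhom_smul {c : K} (hc : c ≠ 0) {P : Fin m → K} (hP : P ≠ 0) :
    Hhom VS (c • P) = Hhom VS P := by
  simp only [Hhom_eq_neg_finsum_minVal, minVal_smul hc hP, add_mul]
  rw [finsum_add_distrib ((VS.finite_support c hc).subset (Function.support_mul_subset_left _ _))
    ((hasFiniteSupport_minVal hP).subset (Function.support_mul_subset_left _ _)),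
    VS.sum_formula c hc, zero_add]

lemma Hhom_le_of_forall_eq_sub {P Q : Fin m → K} (hQ : Q ≠ 0)
    (hsub : ∀ j, ∃ k l, Q j = P k - P l) : Hhom VS Q ≤ Hhom VS P := by
  have hP : P ≠ 0 := by
    rintro rfl
    refine hQ (funext fun j => ?_)
    obtain ⟨k, l, hkl⟩ := hsub j
    simpa using hkl
  have hmin : ∀ i, VS.minVal i P ≤ VS.minVal i Q := fun i =>
    le_minVal hQ fun j hj => by
      obtain ⟨k, l, hkl⟩ := hsub j
      rw [hkl] at hj ⊢
      exact minVal_le_v_sub hj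
  rw [Hhom_eq_neg_finsum_minVal, Hhom_eq_neg_finsum_minVal, neg_le_neg_iff]
  exact finsum_le_finsum'
    ((hasFiniteSupport_minVal hP).subset (Function.support_mul_subset_left _ _))
    ((hasFiniteSupport_minVal hQ).subset (Function.support_mul_subset_left _ _))
    fun i => mul_le_mul_of_nonneg_right (hmin i) (Int.natCast_nonneg _)

end Height

theorem height_le_height_quotient_general {K : Type*} [Field K] {I : Type*}
    (VS : ValuationSetup K I) (u₁ u₂ v₁ v₂ : K)
    (hu₁ : u₁ ≠ 0) (hu₂ : u₂ ≠ 0)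
    (husol : u₁ + u₂ = 1) (hvsol : v₁ + v₂ = 1) (hne : (u₁, u₂) ≠ (v₁, v₂)) :
    Hhom VS ![1, u₁, u₂] ≤ Hhom VS ![1, v₁ * u₁⁻¹, v₂ * u₂⁻¹] := by
  have hw : u₁ - v₁ ≠ 0 := by
    intro hw
    refine hne (Prod.ext (sub_eq_zero.mp hw) ?_)
    linear_combination husol - hvsol - hw
  have hc : (u₁ - v₁) / (u₁ * u₂) ≠ 0 := div_ne_zero hw (mul_ne_zero hu₁ hu₂)
  have hu : ![1, u₁, u₂] ≠ 0 := fun h => one_ne_zero (congrFun h 0)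
  rw [← Hhom_smul VS hc hu]
  refine Hhom_le_of_forall_eq_sub VS (smul_ne_zero hc hu) fun j => ?_
  match j with
  | 0 =>
    refine ⟨2, 1, ?_⟩
    simp only [Pi.smul_apply, smul_eq_mul, Matrix.cons_val_zero, Matrix.cons_val_one,
      Matrix.cons_val_two, Matrix.tail_cons, Matrix.head_cons, mul_one]
    field_simp
    linear_combination v₁ * husol - u₁ * hvsol
  | 1 =>
    refine ⟨2, 0, ?_⟩
    simp only [Pi.smul_apply, smul_eq_mul, Matrix.cons_val_zero, Matrix.cons_val_one,
      Matrix.cons_val_two, Matrix.tail_cons, Matrix.head_cons]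
    field_simp
    linear_combination husol - hvsol
  | 2 =>
    refine ⟨0, 1, ?_⟩
    simp only [Pi.smul_apply, smul_eq_mul, Matrix.cons_val_zero, Matrix.cons_val_one,
      Matrix.cons_val_two, Matrix.tail_cons, Matrix.head_cons]
    field_simp

/-- in the valuation setup, if `u = (u₁, u₂)` and `v = (v₁, v₂)` are distinct
pairs of nonzero elements with `u₁ + u₂ = 1` and `v₁ + v₂ = 1`, then
`H(u₁, u₂) ≤ H(v₁·u₁⁻¹, v₂·u₂⁻¹)`. -/
theorem height_le_height_quotient {K : Type*} [Field K] {I : Type*}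
    (VS : ValuationSetup K I) (u₁ u₂ v₁ v₂ : K)
    (hu₁ : u₁ ≠ 0) (hu₂ : u₂ ≠ 0) (hv₁ : v₁ ≠ 0) (hv₂ : v₂ ≠ 0)
    (husol : u₁ + u₂ = 1) (hvsol : v₁ + v₂ = 1) (hne : (u₁, u₂) ≠ (v₁, v₂)) :
    Hhom VS ![1, u₁, u₂] ≤ Hhom VS ![1, v₁ * u₁⁻¹, v₂ * u₂⁻¹] :=
  height_le_height_quotient_general VS u₁ u₂ v₁ v₂ hu₁ hu₂ husol hvsol hne
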